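/- A set X ⊆ ℝ^d is Capra-convex if and only if X = ρ⁻¹(cl conv(ρ(X))), i.e., X equals the preimage under the radial projection of the closed convex hull of its radial projection. -/

import Mathlib

open Classical in
noncomputable def radProj {d : ℕ} (N : EuclideanSpace ℝ (Fin d) → ℝ)
    (x : EuclideanSpace ℝ (Fin d)) : EuclideanSpace ℝ (Fin d) :=
  if x = 0 then 0 else (N x)⁻¹ • x

noncomputable def capraConj {d : ℕ} (N : EuclideanSpace ℝ (Fin d) → ℝ)
    (f : EuclideanSpace ℝ (Fin d) → EReal) (y : EuclideanSpace ℝ (Fin d)) : EReal :=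
  ⨆ x : EuclideanSpace ℝ (Fin d), ((inner ℝ (radProj N x) y : ℝ) : EReal) - f x

noncomputable def capraBiconj {d : ℕ} (N : EuclideanSpace ℝ (Fin d) → ℝ)
    (f : EuclideanSpace ℝ (Fin d) → EReal) (x : EuclideanSpace ℝ (Fin d)) : EReal :=
  ⨆ y : EuclideanSpace ℝ (Fin d), ((inner ℝ (radProj N x) y : ℝ) : EReal) - capraConj N f y

open Classical in
noncomputable def ind {d : ℕ} (X : Set (EuclideanSpace ℝ (Fin d)))
    (x : EuclideanSpace ℝ (Fin d)) : EReal :=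
  if x ∈ X then 0 else ⊤

def IsCapraConvex {d : ℕ} (N : EuclideanSpace ℝ (Fin d) → ℝ)
    (X : Set (EuclideanSpace ℝ (Fin d))) : Prop :=
  ind X = capraBiconj N (ind X)

def coneHull {d : ℕ} (A : Set (EuclideanSpace ℝ (Fin d))) : Set (EuclideanSpace ℝ (Fin d)) :=
  {y | ∃ a ∈ A, ∃ l : ℝ, 0 < l ∧ y = l • a}


/-!
The Capra conjugate of the indicator of `X` is the support function `σ` of `ρ(X)`, since only
`ρ(x)` enters the coupling. Hence the Capra biconjugate at `x` is the Fenchel biconjugate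
`sup_y ⟪ρ(x), y⟫ - σ(y)` of the indicator of `ρ(X)`, evaluated at `ρ(x)`. This vanishes when
`ρ(x) ∈ cl conv ρ(X)`, as every half-space `{⟪·, y⟫ ≤ r}` containing `ρ(X)` contains its closed
convex hull; otherwise a hyperplane strictly separates `ρ(x)` from `cl conv ρ(X)`, and scaling its
normal drives the supremum to `⊤`. So the biconjugate of `ind X` is `ind (ρ⁻¹(cl conv ρ(X)))`, and
`ind` is injective.
-/

section SupportFunction

variable {E : Type*} [NormedAddCommGroup E] [InnerProductSpace ℝ E]

noncomputable def supportFunction (S : Set E) (y : E) : EReal :=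
  ⨆ s ∈ S, ((inner ℝ s y : ℝ) : EReal)

lemma inner_le_supportFunction {S : Set E} {s : E} (hs : s ∈ S) (y : E) :
    ((inner ℝ s y : ℝ) : EReal) ≤ supportFunction S y :=
  le_iSup₂ (f := fun s (_ : s ∈ S) => ((inner ℝ s y : ℝ) : EReal)) s hs

lemma supportFunction_zero {S : Set E} (hS : S.Nonempty) : supportFunction S 0 = 0 := by
  simp only [supportFunction, inner_zero_right, EReal.coe_zero, biSup_const hS]

lemma supportFunction_smul_le {S : Set E} {y : E} {u : ℝ} (h : supportFunction S y ≤ u)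
    {t : ℝ} (ht : 0 ≤ t) : supportFunction S (t • y) ≤ ((t * u : ℝ) : EReal) := by
  refine iSup₂_le fun s hs => ?_
  rw [real_inner_smul_right, EReal.coe_le_coe_iff]
  exact mul_le_mul_of_nonneg_left
    (EReal.coe_le_coe_iff.mp ((inner_le_supportFunction hs y).trans h)) ht

lemma inner_le_supportFunction_of_mem_closure_convexHull {S : Set E} {z : E}
    (hz : z ∈ closure (convexHull ℝ S)) (y : E) :
    ((inner ℝ z y : ℝ) : EReal) ≤ supportFunction S y := by
  refine EReal.le_of_forall_lt_iff_le.mp fun r hr => ?_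
  have hS : S ⊆ {s | inner ℝ s y ≤ r} := fun s hs =>
    EReal.coe_le_coe_iff.mp ((inner_le_supportFunction hs y).trans hr.le)
  have hlin : IsLinearMap ℝ fun s : E => (inner ℝ s y : ℝ) :=
    ⟨fun a b => inner_add_left a b y, fun c a => real_inner_smul_left a y c⟩
  have hclosure : closure (convexHull ℝ S) ⊆ {s | inner ℝ s y ≤ r} :=
    closure_minimal (convexHull_min hS (convex_halfSpace_le hlin r))
      (isClosed_le (continuous_id.inner continuous_const) continuous_const)
  exact EReal.coe_le_coe_iff.mpr (hclosure hz)

lemma exists_supportFunction_le_lt_inner [CompleteSpace E] {S : Set E} {z : E}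
    (hz : z ∉ closure (convexHull ℝ S)) :
    ∃ (y : E) (u : ℝ), supportFunction S y ≤ u ∧ u < inner ℝ z y := by
  obtain ⟨f, u, hfS, hfz⟩ :=
    geometric_hahn_banach_closed_point (convex_convexHull ℝ S).closure isClosed_closure hz
  have hf : ∀ s, inner ℝ s ((InnerProductSpace.toDual ℝ E).symm f) = f s := fun s => by
    rw [real_inner_comm, InnerProductSpace.toDual_symm_apply]
  refine ⟨(InnerProductSpace.toDual ℝ E).symm f, u, iSup₂_le fun s hs => ?_, by rwa [hf]⟩
  rw [hf, EReal.coe_le_coe_iff]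
  exact (hfS s (subset_closure (subset_convexHull ℝ S hs))).le

lemma iSup_inner_sub_supportFunction_of_mem {S : Set E} {z : E}
    (hz : z ∈ closure (convexHull ℝ S)) :
    ⨆ y, ((inner ℝ z y : ℝ) : EReal) - supportFunction S y = 0 := by
  have hS : S.Nonempty := by
    by_contra hS
    simp [Set.not_nonempty_iff_eq_empty.mp hS] at hz
  refine le_antisymm (iSup_le fun y => ?_) (le_iSup_of_le 0 ?_)
  · exact EReal.sub_nonpos.mpr (inner_le_supportFunction_of_mem_closure_convexHull hz y)
  · simp [supportFunction_zero hS]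

lemma iSup_inner_sub_supportFunction_of_notMem [CompleteSpace E] {S : Set E} {z : E}
    (hz : z ∉ closure (convexHull ℝ S)) :
    ⨆ y, ((inner ℝ z y : ℝ) : EReal) - supportFunction S y = ⊤ := by
  obtain ⟨y, u, hyu, hu⟩ := exists_supportFunction_le_lt_inner hz
  have hδ : 0 < inner ℝ z y - u := sub_pos.mpr hu
  refine (EReal.eq_top_iff_forall_lt _).mpr fun C => ?_
  obtain ⟨n, hn⟩ := exists_nat_gt (C / (inner ℝ z y - u))
  have ht : (0 : ℝ) ≤ n := n.cast_nonneg
  calc (C : EReal) < ((n * (inner ℝ z y - u) : ℝ) : EReal) :=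
        EReal.coe_lt_coe_iff.mpr ((div_lt_iff₀ hδ).mp hn)
    _ = ((inner ℝ z ((n : ℝ) • y) : ℝ) : EReal) - ((n * u : ℝ) : EReal) := by
        rw [real_inner_smul_right, ← EReal.coe_sub, mul_sub]
    _ ≤ ((inner ℝ z ((n : ℝ) • y) : ℝ) : EReal) - supportFunction S ((n : ℝ) • y) :=
        EReal.sub_le_sub le_rfl (supportFunction_smul_le hyu ht)
    _ ≤ _ := le_iSup (fun y => ((inner ℝ z y : ℝ) : EReal) - supportFunction S y) _

end SupportFunction

section Capra

variable {d : ℕ}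

lemma ind_injective : Function.Injective (ind (d := d)) := by
  intro A B h
  ext x
  have hx := congrFun h x
  by_cases hA : x ∈ A <;> by_cases hB : x ∈ B <;> simp_all [ind]

lemma capraConj_ind (N : EuclideanSpace ℝ (Fin d) → ℝ) (X : Set (EuclideanSpace ℝ (Fin d))) :
    capraConj N (ind X) = supportFunction (radProj N '' X) := by
  funext y
  rw [capraConj, supportFunction, iSup_image]
  refine iSup_congr fun x => ?_
  by_cases hx : x ∈ X <;> simp [ind, hx]

lemma capraBiconj_ind (N : EuclideanSpace ℝ (Fin d) → ℝ) (X : Set (EuclideanSpace ℝ (Fin d))) :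
    capraBiconj N (ind X) = ind (radProj N ⁻¹' closure (convexHull ℝ (radProj N '' X))) := by
  funext x
  rw [capraBiconj, capraConj_ind]
  by_cases hx : radProj N x ∈ closure (convexHull ℝ (radProj N '' X))
  · simp [ind, hx, iSup_inner_sub_supportFunction_of_mem hx]
  · simp [ind, hx, iSup_inner_sub_supportFunction_of_notMem hx]

end Capra

theorem stmt_general {d : ℕ} (N : EuclideanSpace ℝ (Fin d) → ℝ)
    (X : Set (EuclideanSpace ℝ (Fin d))) :
    IsCapraConvex N X ↔ X = radProj N ⁻¹' closure (convexHull ℝ (radProj N '' X)) := by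
  rw [IsCapraConvex, capraBiconj_ind]
  exact ind_injective.eq_iff

theorem stmt {d : ℕ} (N : EuclideanSpace ℝ (Fin d) → ℝ)
    (hN0 : ∀ x : EuclideanSpace ℝ (Fin d), N x = 0 ↔ x = 0)
    (hNh : ∀ (a : ℝ) (x : EuclideanSpace ℝ (Fin d)), N (a • x) = |a| * N x)
    (hNt : ∀ x y : EuclideanSpace ℝ (Fin d), N (x + y) ≤ N x + N y)
    (X : Set (EuclideanSpace ℝ (Fin d))) :
    IsCapraConvex N X ↔ X = radProj N ⁻¹' closure (convexHull ℝ (radProj N '' X)) :=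
  stmt_general N X
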